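/- Every path of π has at most 2b+1 outstanding elements; equivalently, a path cannot contain 2b+2 elements all having the same (defined) maximal rank. -/

import Mathlib

/-- The `b`-local minima of a path, represented as the list of values (in path order):
a position is kept iff its value is smaller than all values at distance at most `b` in the
list, comparisons with out-of-range (undefined) positions being disregarded. -/
def pmins (b : ℕ) (l : List ℕ) : List ℕ :=
  (List.range l.length).filterMap fun p =>
    if ∀ q ∈ List.range l.length, q ≠ p → p ≤ q + b → q ≤ p + b → l.getD p 0 < l.getD q 0
    then some (l.getD p 0) else none

/-- `plevel b l r` is the list of elements of `E_{r+1}` of the path `l` (0-indexed: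
`plevel b l 0 = l` is `E_1`), in path order. -/
def plevel (b : ℕ) (l : List ℕ) : ℕ → List ℕ
  | 0 => l
  | r + 1 => pmins b (plevel b l r)

/-- Advance `s` steps along the (level) list `l` from the element with value `v`;
`none` if undefined (i.e. `v ∉ l` or the advance would run past the end of the path). -/
def padv (s : ℕ) (l : List ℕ) (v : ℕ) : Option ℕ :=
  if v ∈ l ∧ l.idxOf v + s < l.length then some (l.getD (l.idxOf v + s) 0) else none

/-- Retreat `s` steps along the (level) list `l` from the element with value `v`;
`none` if undefined. -/
def pret (s : ℕ) (l : List ℕ) (v : ℕ) : Option ℕ :=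
  if v ∈ l ∧ s ≤ l.idxOf v then some (l.getD (l.idxOf v - s) 0) else none

/-- `iSeqP b l i k` is the element `i_{k+1}` of the (tentative) `b`-staircase from `i` on the
path `l`: `i_1 = i` and `i_{k+1} = π_k^b(i_k)`; `none` if undefined. -/
def iSeqP (b : ℕ) (l : List ℕ) (i : ℕ) : ℕ → Option ℕ
  | 0 => if i ∈ l then some i else none
  | k + 1 => (iSeqP b l i k).bind (padv b (plevel b l k))

/-- `jSeqP b l r m q` is the element `j_{r+1-q}` of the descending part of the `b`-staircase of
size `r` with middle `m` on the path `l`: `j_{r+1} = m` and `j_k = π_k^b(j_{k+1})`. -/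
def jSeqP (b : ℕ) (l : List ℕ) (r m : ℕ) : ℕ → Option ℕ
  | 0 => some m
  | q + 1 => (jSeqP b l r m q).bind (padv b (plevel b l (r - (q + 1))))

/-- There is a `b`-staircase of size `r` from `i` on the path `l`. -/
def IsStaircaseP (b : ℕ) (l : List ℕ) (r i : ℕ) : Prop :=
  ∃ m, iSeqP b l i r = some m ∧ m ∈ plevel b l r ∧ (jSeqP b l r m r).isSome

/-- There is an almost `b`-staircase of size `r` from `i` on the path `l`
(membership in `E_k` required only for `k ∈ [r]`). -/
def IsAlmostP (b : ℕ) (l : List ℕ) (r i : ℕ) : Prop :=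
  ∃ m, iSeqP b l i r = some m ∧ (jSeqP b l r m r).isSome

/-- The `b`-staircase of size `r` from `i` is the best one: on a path every almost
`b`-staircase is proper, so `i` has no almost `b`-staircase of size `r+1`. -/
def IsBestP (b : ℕ) (l : List ℕ) (r i : ℕ) : Prop :=
  IsStaircaseP b l r i ∧ ¬ IsAlmostP b l (r + 1) i

/-- There is a half `b`-staircase of size `r` from `i` on the path `l`:
`i_1 = i, …, i_{r+1} = m = j_r, j_{r-1}, …, j_1`. -/
def IsHalfP (b : ℕ) (l : List ℕ) (r i : ℕ) : Prop :=
  ∃ m, iSeqP b l i r = some m ∧ (jSeqP b l (r - 1) m (r - 1)).isSome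

/-- `ExtRank b l i v` says that the extended rank of `i` on the path `l` is `(t, h)`,
encoded (lexicographically faithfully) as the natural number `v = 2t + h`, where `t` is the
rank of `i` (the size of the best staircase from `i`) and `h` records whether a half staircase
of size `t+1` from `i` exists. -/
def ExtRank (b : ℕ) (l : List ℕ) (i v : ℕ) : Prop :=
  ∃ t, IsBestP b l t i ∧
    ((IsHalfP b l (t + 1) i ∧ v = 2 * t + 1) ∨ (¬ IsHalfP b l (t + 1) i ∧ v = 2 * t))

/-- `len(u,w) = min{k > 0 : π^k(u) = w}` (0 if unreachable). -/
noncomputable def lenTo {n : ℕ} (π : Equiv.Perm (Fin n)) (u w : Fin n) : ℕ :=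
  letI := Classical.propDecidable
  if h : ∃ k, 0 < k ∧ (⇑π)^[k] u = w then Nat.find h else 0

/-- The path obtained from the cycle of `π` containing `x` by cutting before `π(x)`
(i.e. setting `π(x) := ⊥`), as the list of its elements (values) in path order:
it starts at `π(x)` and ends at `x`. -/
noncomputable def pathOf {n : ℕ} (π : Equiv.Perm (Fin n)) (x : Fin n) : List ℕ :=
  (List.range (lenTo π x x)).map fun j => ((⇑π)^[j + 1] x).val
/-!
The middles `i_{t+1}` of the best staircases of `2b+2` distinct elements are distinct (each
ascending `b`-step is injective), so two of them, `m` and `m̃`, lie at least `2b+1` apart on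
`E_{t+1}`. Two further `b`-steps on `E_{t+1}` from `m` still land strictly before `m̃`. Descending
`b`-steps preserve the order of two elements of a level, and that order survives passing to the
next lower level, so the descent from the point before `m̃` is defined as long as the one from `m̃`
is. This yields an almost staircase of size `t+1` from the element with middle `m`, contradicting
that its staircase of size `t` is best.
-/

namespace List

theorem Sublist.idxOf_lt_idxOf {α : Type*} [BEq α] [LawfulBEq α] {s l : List α} (h : s <+ l)
    (hl : l.Nodup) {u w : α} (hu : u ∈ s) (hw : w ∈ s) (hlt : s.idxOf u < s.idxOf w) :
    l.idxOf u < l.idxOf w := by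
  obtain ⟨e, he⟩ := sublist_iff_exists_fin_orderEmbedding_get_eq.mp h
  have idxOf_eq : ∀ v (hv : v ∈ s), l.idxOf v = e ⟨s.idxOf v, idxOf_lt_length_of_mem hv⟩ := by
    intro v hv
    have hget := he ⟨s.idxOf v, idxOf_lt_length_of_mem hv⟩
    simp only [get_eq_getElem, getElem_idxOf] at hget
    conv_lhs => rw [hget]
    exact hl.idxOf_getElem _ _
  rw [idxOf_eq u hu, idxOf_eq w hw]
  exact e.strictMono hlt

theorem filterMap_sublist_map {α β : Type*} {f : α → Option β} {g : α → β}
    (hfg : ∀ a b, f a = some b → b = g a) (r : List α) : r.filterMap f <+ r.map g := by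
  induction r with
  | nil => simp
  | cons a r ih =>
    rw [filterMap_cons, map_cons]
    cases hfa : f a with
    | none => exact ih.cons _
    | some b => exact hfg a b hfa ▸ ih.cons_cons _

end List

theorem Finset.min'_add_card_sub_one_le_max' (s : Finset ℕ) (hs : s.Nonempty) :
    s.min' hs + (s.card - 1) ≤ s.max' hs := by
  have hIcc : s.card ≤ (Finset.Icc (s.min' hs) (s.max' hs)).card :=
    Finset.card_le_card fun y hy => Finset.mem_Icc.mpr ⟨s.min'_le y hy, s.le_max' y hy⟩
  rw [Nat.card_Icc] at hIcc
  have := s.min'_le_max' hs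
  omega

theorem Function.Injective.exists_add_le {N : ℕ} {g : Fin (N + 1) → ℕ} (hg : Injective g) :
    ∃ a c, g a + N ≤ g c := by
  classical
  have hs : (Finset.univ.image g).Nonempty := Finset.univ_nonempty.image g
  obtain ⟨a, -, ha⟩ := Finset.mem_image.mp ((Finset.univ.image g).min'_mem hs)
  obtain ⟨c, -, hc⟩ := Finset.mem_image.mp ((Finset.univ.image g).max'_mem hs)
  refine ⟨a, c, ?_⟩
  have := (Finset.univ.image g).min'_add_card_sub_one_le_max' hs
  rwa [Finset.card_image_of_injective _ hg, Finset.card_univ, Fintype.card_fin,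
    Nat.add_sub_cancel, ← ha, ← hc] at this

theorem lenTo_self_le_minimalPeriod {n : ℕ} (π : Equiv.Perm (Fin n)) (x : Fin n) :
    lenTo π x x ≤ Function.minimalPeriod π x := by
  unfold lenTo
  split_ifs with h
  · have hx : x ∈ Function.periodicPts π := h
    convert Nat.find_min' h
      ⟨Function.minimalPeriod_pos_of_mem_periodicPts hx, Function.iterate_minimalPeriod⟩
  · exact Nat.zero_le _

theorem pathOf_nodup {n : ℕ} (π : Equiv.Perm (Fin n)) (x : Fin n) : (pathOf π x).Nodup := by
  refine List.Nodup.map_on (fun i hi j hj hij => ?_) List.nodup_range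
  rw [List.mem_range] at hi hj
  have hij' : (⇑π)^[i] x = (⇑π)^[j] x := by
    apply π.injective
    simpa only [Function.iterate_succ_apply'] using Fin.val_injective hij
  exact Function.iterate_injOn_Iio_minimalPeriod (hi.trans_le (lenTo_self_le_minimalPeriod π x))
    (hj.trans_le (lenTo_self_le_minimalPeriod π x)) hij'

section Staircase

open scoped List

variable {b s : ℕ} {l : List ℕ}

theorem pmins_sublist : pmins b l <+ l :=
  calc pmins b l <+ (List.range l.length).map (l.getD · 0) :=
        List.filterMap_sublist_map (fun p v hp => by
          split_ifs at hp; exact (Option.some.inj hp).symm) _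
    _ = l := List.ext_getElem (by simp) fun i _ hi => by simp [hi]

theorem plevel_nodup (hl : l.Nodup) (k : ℕ) : (plevel b l k).Nodup := by
  induction k with
  | zero => exact hl
  | succ k ih => exact pmins_sublist.nodup ih

theorem padv_isSome_iff {v : ℕ} :
    (padv s l v).isSome ↔ v ∈ l ∧ l.idxOf v + s < l.length := by
  unfold padv
  split_ifs with h <;> simp [h]

theorem padv_eq_some_iff (hl : l.Nodup) {v w : ℕ} :
    padv s l v = some w ↔ v ∈ l ∧ w ∈ l ∧ l.idxOf w = l.idxOf v + s := by
  unfold padv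
  constructor
  · intro h
    split_ifs at h with hv
    rw [List.getD_eq_getElem _ _ hv.2, Option.some.injEq] at h
    subst h
    exact ⟨hv.1, List.getElem_mem _, hl.idxOf_getElem _ _⟩
  · rintro ⟨hv, hw, hidx⟩
    have hlen : l.idxOf v + s < l.length := hidx ▸ List.idxOf_lt_length_of_mem hw
    rw [if_pos ⟨hv, hlen⟩, ← hidx, List.getD_eq_getElem _ _ (hidx ▸ hlen), List.getElem_idxOf]

theorem exists_padv_eq_some (hl : l.Nodup) {v : ℕ} (hv : v ∈ l)
    (hlen : l.idxOf v + s < l.length) :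
    ∃ w, padv s l v = some w ∧ w ∈ l ∧ l.idxOf w = l.idxOf v + s := by
  obtain ⟨w, hw⟩ := Option.isSome_iff_exists.mp (padv_isSome_iff.mpr ⟨hv, hlen⟩)
  exact ⟨w, hw, ((padv_eq_some_iff hl).mp hw).2⟩

theorem exists_padv_eq_some_of_idxOf_lt (hl : l.Nodup) {j k k' : ℕ}
    (hj : j ∈ l) (hjk : l.idxOf j < l.idxOf k) (hk : padv s l k = some k') :
    ∃ j', padv s l j = some j' ∧ j' ∈ l ∧ l.idxOf j' < l.idxOf k' := by
  obtain ⟨-, hk', hidx⟩ := (padv_eq_some_iff hl).mp hk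
  have hlen := List.idxOf_lt_length_of_mem hk'
  obtain ⟨j', hj', hj'l, hidx'⟩ := exists_padv_eq_some hl hj (s := s) (by omega)
  exact ⟨j', hj', hj'l, by omega⟩

theorem iSeqP_injective (hl : l.Nodup) :
    ∀ {k i i' u : ℕ}, iSeqP b l i k = some u → iSeqP b l i' k = some u → i = i'
  | 0, i, i', u, h, h' => by
    simp only [iSeqP, Option.ite_none_right_eq_some, Option.some.injEq] at h h'
    exact h.2.trans h'.2.symm
  | k + 1, i, i', u, h, h' => by
    obtain ⟨v, hv, hvu⟩ := Option.bind_eq_some_iff.mp h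
    obtain ⟨v', hv', hvu'⟩ := Option.bind_eq_some_iff.mp h'
    obtain ⟨hvl, -, hidx⟩ := (padv_eq_some_iff (plevel_nodup hl k)).mp hvu
    obtain ⟨-, -, hidx'⟩ := (padv_eq_some_iff (plevel_nodup hl k)).mp hvu'
    obtain rfl : v = v' := (List.idxOf_inj hvl).mp (by omega)
    exact iSeqP_injective hl hv hv'

theorem jSeqP_succ_succ (r m : ℕ) :
    ∀ q, jSeqP b l (r + 1) m (q + 1) =
      (padv b (plevel b l r) m).bind fun j => jSeqP b l r j q
  | 0 => by simp [jSeqP]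
  | q + 1 => by
    rw [jSeqP, jSeqP_succ_succ r m q, Option.bind_assoc]
    simp only [jSeqP, show r + 1 - (q + 1 + 1) = r - (q + 1) by omega]

theorem jSeqP_isSome_of_idxOf_lt (hl : l.Nodup) :
    ∀ {r j k : ℕ}, j ∈ plevel b l r → k ∈ plevel b l r →
      (plevel b l r).idxOf j < (plevel b l r).idxOf k →
      (jSeqP b l r k r).isSome → (jSeqP b l r j r).isSome
  | 0, _, _, _, _, _, _ => rfl
  | r + 1, j, k, hj, hk, hjk, hdesc => by
    rw [jSeqP_succ_succ] at hdesc ⊢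
    obtain ⟨k', hk', hdesc'⟩ : ∃ k', padv b (plevel b l r) k = some k' ∧
        (jSeqP b l r k' r).isSome := by
      simpa only [Option.isSome_bind, Option.any_eq_true] using hdesc
    have hsub : plevel b l (r + 1) <+ plevel b l r := pmins_sublist
    obtain ⟨j', hj', hj'l, hjk'⟩ := exists_padv_eq_some_of_idxOf_lt (plevel_nodup hl r)
      (hsub.subset hj) (hsub.idxOf_lt_idxOf (plevel_nodup hl r) hj hk hjk) hk'
    have hk'l := ((padv_eq_some_iff (plevel_nodup hl r)).mp hk').2.1
    rw [hj', Option.bind_some]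
    exact jSeqP_isSome_of_idxOf_lt hl hj'l hk'l hjk' hdesc'

theorem isAlmostP_succ_of_idxOf_add_lt (hl : l.Nodup) {r i m k : ℕ}
    (hi : iSeqP b l i r = some m) (hm : m ∈ plevel b l r) (hk : k ∈ plevel b l r)
    (hdesc : (jSeqP b l r k r).isSome)
    (hmk : (plevel b l r).idxOf m + 2 * b < (plevel b l r).idxOf k) :
    IsAlmostP b l (r + 1) i := by
  have hnd := plevel_nodup (b := b) hl r
  have hlen := List.idxOf_lt_length_of_mem hk
  obtain ⟨m', hm', hm'l, hm'idx⟩ := exists_padv_eq_some hnd hm (s := b) (by omega)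
  obtain ⟨j, hj, hjl, hjidx⟩ := exists_padv_eq_some hnd hm'l (s := b) (by omega)
  refine ⟨m', by rw [iSeqP, hi, Option.bind_some, hm'], ?_⟩
  rw [jSeqP_succ_succ, hj, Option.bind_some]
  exact jSeqP_isSome_of_idxOf_lt hl hjl hk (by omega) hdesc

end Staircase

theorem outstanding_at_most_general (n b : ℕ) (π : Equiv.Perm (Fin n)) (x : Fin n)
    (P : List ℕ) (hP : P = pathOf π x)
    (t : ℕ) (f : Fin (2 * b + 2) → ℕ) (hinj : Function.Injective f)
    (hrank : ∀ a, IsBestP b P t (f a)) :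
    False := by
  have hnd : P.Nodup := hP ▸ pathOf_nodup π x
  choose m hm hmE hdesc using fun a => (hrank a).1
  have hpos : Function.Injective fun a => (plevel b P t).idxOf (m a) := fun a a' h =>
    hinj <| iSeqP_injective hnd (hm a) ((List.idxOf_inj (hmE a)).mp h ▸ hm a')
  obtain ⟨a, c, hac⟩ := hpos.exists_add_le (N := 2 * b + 1)
  exact (hrank a).2 <| isAlmostP_succ_of_idxOf_add_lt hnd (hm a) (hmE a) (hmE c) (hdesc c)
    (by omega)

/-- Every path of `π` has at most `2b+1` outstanding elements; equivalently,
a path cannot contain `2b+2` (distinct) elements all having the same (defined) maximal rank. -/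
theorem outstanding_at_most (n b : ℕ) (hb : 1 ≤ b) (π : Equiv.Perm (Fin n)) (x : Fin n)
    (P : List ℕ) (hP : P = pathOf π x)
    (t : ℕ) (f : Fin (2 * b + 2) → ℕ) (hinj : Function.Injective f)
    (hmem : ∀ a, f a ∈ P) (hrank : ∀ a, IsBestP b P t (f a))
    (hmax : ∀ w ∈ P, ∀ t', IsBestP b P t' w → t' ≤ t) :
    False :=
  outstanding_at_most_general n b π x P hP t f hinj hrank
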